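/- arXiv:2003.09852 — 4 statements merged into one kernel-verified Lean document; each statement's English description precedes it below -/
import Mathlib

section
/- Under the same hypotheses, the partial derivative of t with respect to the direction v at (θ₀,c₀,v₀) equals -t₀·∇ₓf(x₀;θ₀) / ⟨∇ₓf(x₀;θ₀), v₀⟩. -/
open scoped RealInnerProductSpace
open Topology

/-! Differentiating `f (c + t(v) • v) = 0` in `v` by the chain rule gives
`t₀ ⟪g, w⟫ + Dₜ(w) ⟪g, v₀⟫ = 0` for every direction `w`; since `⟪g, v₀⟫ ≠ 0` this determines
the derivative `Dₜ` of `t`, i.e. its gradient `-(t₀ / ⟪g, v₀⟫) • g`. -/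

theorem HasFDerivAt.const_add_smul_self {E : Type*} [NormedAddCommGroup E] [NormedSpace ℝ E]
    {τ : E → ℝ} {L : E →L[ℝ] ℝ} {v₀ : E} (hτ : HasFDerivAt τ L v₀) (c : E) :
    HasFDerivAt (fun v => c + τ v • v) (τ v₀ • ContinuousLinearMap.id ℝ E + L.smulRight v₀) v₀ :=
  (hτ.smul (hasFDerivAt_id v₀)).const_add c

section RayImplicit

variable {E : Type*} [NormedAddCommGroup E] [InnerProductSpace ℝ E] [CompleteSpace E]
  {F τ : E → ℝ} {c v₀ g : E}

theorem implicit_ray_fderiv_apply (hF : HasGradientAt F g (c + τ v₀ • v₀))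
    (hτ : DifferentiableAt ℝ τ v₀) (hzero : ∀ᶠ v in 𝓝 v₀, F (c + τ v • v) = 0) (w : E) :
    τ v₀ * ⟪g, w⟫ + fderiv ℝ τ v₀ w * ⟪g, v₀⟫ = 0 := by
  have hcomp := hF.hasFDerivAt.comp v₀ (hτ.hasFDerivAt.const_add_smul_self c)
  have hD : (InnerProductSpace.toDual ℝ E g).comp
      (τ v₀ • ContinuousLinearMap.id ℝ E + (fderiv ℝ τ v₀).smulRight v₀) = 0 :=
    hcomp.unique ((hasFDerivAt_const 0 v₀).congr_of_eventuallyEq hzero)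
  simpa [inner_add_right, real_inner_smul_right, mul_comm] using congrArg (· w) hD

theorem implicit_ray_hasGradientAt (hF : HasGradientAt F g (c + τ v₀ • v₀))
    (hτ : DifferentiableAt ℝ τ v₀) (hzero : ∀ᶠ v in 𝓝 v₀, F (c + τ v • v) = 0)
    (hg : ⟪g, v₀⟫ ≠ 0) :
    HasGradientAt τ (-(τ v₀ / ⟪g, v₀⟫) • g) v₀ := by
  rw [hasGradientAt_iff_hasFDerivAt]
  refine hτ.hasFDerivAt.congr_fderiv (ContinuousLinearMap.ext fun w => ?_)
  have hkey := implicit_ray_fderiv_apply hF hτ hzero w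
  rw [InnerProductSpace.toDual_apply_apply, real_inner_smul_left]
  field_simp
  linarith [hkey]

end RayImplicit

/-- Implicit differentiation of the ray-surface intersection parameter `t` with
respect to the ray direction `v`. -/
theorem gradient_t_wrt_v {m : ℕ}
    (f : EuclideanSpace ℝ (Fin 3) → EuclideanSpace ℝ (Fin m) → ℝ)
    (t : EuclideanSpace ℝ (Fin m) → EuclideanSpace ℝ (Fin 3) → EuclideanSpace ℝ (Fin 3) → ℝ)
    (θ₀ : EuclideanSpace ℝ (Fin m)) (c₀ v₀ : EuclideanSpace ℝ (Fin 3))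
    (hf : ContDiff ℝ 1 (fun p : EuclideanSpace ℝ (Fin 3) × EuclideanSpace ℝ (Fin m) => f p.1 p.2))
    (ht : ∀ᶠ p : EuclideanSpace ℝ (Fin m) × EuclideanSpace ℝ (Fin 3) × EuclideanSpace ℝ (Fin 3)
        in nhds (θ₀, c₀, v₀), f (p.2.1 + t p.1 p.2.1 p.2.2 • p.2.2) p.1 = 0)
    (ht' : DifferentiableAt ℝ
      (fun p : EuclideanSpace ℝ (Fin m) × EuclideanSpace ℝ (Fin 3) × EuclideanSpace ℝ (Fin 3) =>
        t p.1 p.2.1 p.2.2) (θ₀, c₀, v₀))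
    (t₀ : ℝ) (ht₀ : t₀ = t θ₀ c₀ v₀)
    (x₀ : EuclideanSpace ℝ (Fin 3)) (hx₀ : x₀ = c₀ + t₀ • v₀)
    (g : EuclideanSpace ℝ (Fin 3)) (hgdef : g = gradient (fun x => f x θ₀) x₀)
    (hg : ⟪g, v₀⟫ ≠ 0) :
    gradient (fun v => t θ₀ c₀ v) v₀ = (-(t₀ / ⟪g, v₀⟫)) • g := by
  subst ht₀ hx₀ hgdef
  have hslice : DifferentiableAt ℝ (fun x => f x θ₀) (c₀ + t θ₀ c₀ v₀ • v₀) :=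
    (hf.differentiable one_ne_zero).differentiableAt.comp _
      (differentiableAt_id.prodMk (differentiableAt_const θ₀))
  have hline : Differentiable ℝ fun v : EuclideanSpace ℝ (Fin 3) => (θ₀, c₀, v) := by fun_prop
  have hτ : DifferentiableAt ℝ (t θ₀ c₀) v₀ := (ht'.comp v₀ (hline v₀) :)
  have hzero : ∀ᶠ v in 𝓝 v₀, f (c₀ + t θ₀ c₀ v • v) θ₀ = 0 :=
    hline.continuous.continuousAt.eventually ht
  exact (implicit_ray_hasGradientAt hslice.hasGradientAt hτ hzero hg).gradient
end

section
/- Define the surrogate t̂(θ,c,v) = t₀ - f(c + t₀v; θ) / ⟨∇ₓf(x₀;θ₀), v₀⟩. Then t̂(θ₀,c₀,v₀) = t₀, and the partial derivatives of t̂ with respect to θ, c, and v at (θ₀,c₀,v₀) agree with those of the implicitly defined intersection parameter t. -/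
open scoped RealInnerProductSpace

/-!
Differentiating `f (c + t v) θ = 0` along the graph of `t` gives
`∂_{(θ,c,v)} f + ⟨∇ₓf(x₀;θ₀), v₀⟩ · Dt = 0`. The surrogate freezes `t` at `t₀`, so its derivative is
`-∂_{(θ,c,v)} f / ⟨∇ₓf(x₀;θ₀), v₀⟩`, which is therefore `Dt`; the partial derivatives follow by
restricting this equality of total derivatives to each factor.
-/

open Filter Topology ContinuousLinearMap

section

variable {Q : Type*} [NormedAddCommGroup Q] [NormedSpace ℝ Q]

theorem hasFDerivAt_newton_step_of_implicit {Φ : Q → ℝ → ℝ} {t : Q → ℝ} {T : Q →L[ℝ] ℝ}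
    {q₀ : Q} {d : ℝ} (hΦ : DifferentiableAt ℝ (Function.uncurry Φ) (q₀, t q₀))
    (hd : HasDerivAt (Φ q₀) d (t q₀)) (hd₀ : d ≠ 0) (ht : HasFDerivAt t T q₀)
    (hzero : ∀ᶠ q in 𝓝 q₀, Φ q (t q) = 0) :
    HasFDerivAt (fun q => t q₀ - Φ q (t q₀) / d) T q₀ := by
  set L := fderiv ℝ (Function.uncurry Φ) (q₀, t q₀)
  have hL : HasFDerivAt (Function.uncurry Φ) L (q₀, t q₀) := hΦ.hasFDerivAt
  have hL_inr : L (0, 1) = d := by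
    have h := (hL.comp (t q₀) (hasFDerivAt_prodMk_right q₀ (t q₀))).unique hd.hasFDerivAt
    simpa using congrArg (· 1) h
  have hL_graph : L.comp ((ContinuousLinearMap.id ℝ Q).prod T) = 0 := by
    have h : HasFDerivAt (fun q => Φ q (t q)) (L.comp ((ContinuousLinearMap.id ℝ Q).prod T)) q₀ :=
      hL.comp (f := fun q => (q, t q)) q₀ ((hasFDerivAt_id q₀).prodMk ht)
    exact h.unique ((hasFDerivAt_const 0 q₀).congr_of_eventuallyEq hzero)
  have hslice : HasFDerivAt (fun q => Φ q (t q₀)) (L.comp (inl ℝ Q ℝ)) q₀ :=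
    hL.comp (f := fun q => (q, t q₀)) q₀ (hasFDerivAt_prodMk_left q₀ (t q₀))
  have hT : -(d⁻¹ • L.comp (inl ℝ Q ℝ)) = T := by
    ext q
    have h := congrArg (· q) hL_graph
    have hsplit : L (q, T q) = L (q, 0) + T q * L (0, 1) := by
      rw [← smul_eq_mul, ← map_smul, ← map_add]
      simp
    simp only [comp_apply, prod_apply, id_apply, zero_apply, hsplit, hL_inr] at h
    simp only [neg_apply, smul_apply, comp_apply, inl_apply, smul_eq_mul]
    field_simp
    linarith
  simpa only [div_eq_mul_inv] using ((hslice.mul_const d⁻¹).const_sub (t q₀)).congr_fderiv hT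

theorem HasGradientAt.hasDerivAt_comp_ray {E : Type*} [NormedAddCommGroup E]
    [InnerProductSpace ℝ E] [CompleteSpace E] {f : E → ℝ} {g c v : E} {τ : ℝ}
    (hf : HasGradientAt f g (c + τ • v)) :
    HasDerivAt (fun s : ℝ => f (c + s • v)) ⟪g, v⟫ τ := by
  have h := hf.hasFDerivAt.comp_hasDerivAt τ (((hasDerivAt_id τ).smul_const v).const_add c)
  rwa [one_smul, InnerProductSpace.toDual_apply_apply] at h

theorem fderiv_comp_eq_of_hasFDerivAt {X R : Type*} [NormedAddCommGroup X] [NormedSpace ℝ X]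
    [NormedAddCommGroup R] [NormedSpace ℝ R] {F G : Q → R} {L : Q →L[ℝ] R} {q : Q}
    (hF : HasFDerivAt F L q) (hG : HasFDerivAt G L q) {e : X → Q} {x : X}
    (he : DifferentiableAt ℝ e x) (hx : e x = q) :
    fderiv ℝ (fun y => F (e y)) x = fderiv ℝ (fun y => G (e y)) x := by
  subst hx
  exact (hF.comp x he.hasFDerivAt).fderiv.trans (hG.comp x he.hasFDerivAt).fderiv.symm

end

/-- Lemma 1 (sample network surrogate, scalar form): the surrogate
`t̂(θ,c,v) = t₀ - f(c + t₀ v; θ) / ⟨∇ₓf(x₀;θ₀), v₀⟩` agrees with the implicitly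
defined intersection parameter `t` in value and in all first partial derivatives
at `(θ₀, c₀, v₀)`. -/
theorem sample_network_scalar {m : ℕ}
    (f : EuclideanSpace ℝ (Fin 3) → EuclideanSpace ℝ (Fin m) → ℝ)
    (t : EuclideanSpace ℝ (Fin m) → EuclideanSpace ℝ (Fin 3) → EuclideanSpace ℝ (Fin 3) → ℝ)
    (θ₀ : EuclideanSpace ℝ (Fin m)) (c₀ v₀ : EuclideanSpace ℝ (Fin 3))
    (hf : ContDiff ℝ 1 (fun p : EuclideanSpace ℝ (Fin 3) × EuclideanSpace ℝ (Fin m) => f p.1 p.2))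
    (ht : ∀ᶠ p : EuclideanSpace ℝ (Fin m) × EuclideanSpace ℝ (Fin 3) × EuclideanSpace ℝ (Fin 3)
        in nhds (θ₀, c₀, v₀), f (p.2.1 + t p.1 p.2.1 p.2.2 • p.2.2) p.1 = 0)
    (ht' : DifferentiableAt ℝ
      (fun p : EuclideanSpace ℝ (Fin m) × EuclideanSpace ℝ (Fin 3) × EuclideanSpace ℝ (Fin 3) =>
        t p.1 p.2.1 p.2.2) (θ₀, c₀, v₀))
    (t₀ : ℝ) (ht₀ : t₀ = t θ₀ c₀ v₀)
    (x₀ : EuclideanSpace ℝ (Fin 3)) (hx₀ : x₀ = c₀ + t₀ • v₀)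
    (g : EuclideanSpace ℝ (Fin 3)) (hgdef : g = gradient (fun x => f x θ₀) x₀)
    (hg : ⟪g, v₀⟫ ≠ 0)
    (that : EuclideanSpace ℝ (Fin m) → EuclideanSpace ℝ (Fin 3) → EuclideanSpace ℝ (Fin 3) → ℝ)
    (hthat : ∀ θ c v, that θ c v = t₀ - f (c + t₀ • v) θ / ⟪g, v₀⟫) :
    that θ₀ c₀ v₀ = t₀ ∧
    fderiv ℝ (fun θ => that θ c₀ v₀) θ₀ = fderiv ℝ (fun θ => t θ c₀ v₀) θ₀ ∧
    fderiv ℝ (fun c => that θ₀ c v₀) c₀ = fderiv ℝ (fun c => t θ₀ c v₀) c₀ ∧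
    fderiv ℝ (fun v => that θ₀ c₀ v) v₀ = fderiv ℝ (fun v => t θ₀ c₀ v) v₀ := by
  subst ht₀ hx₀
  obtain rfl : that = fun θ c v => t θ₀ c₀ v₀ - f (c + t θ₀ c₀ v₀ • v) θ / ⟪g, v₀⟫ :=
    funext fun θ => funext fun c => funext fun v => hthat θ c v
  have hf' : Differentiable ℝ (fun p : EuclideanSpace ℝ (Fin 3) × EuclideanSpace ℝ (Fin m) =>
      f p.1 p.2) := hf.differentiable one_ne_zero
  have hΦ : DifferentiableAt ℝ
      (Function.uncurry fun (p : EuclideanSpace ℝ (Fin m) × EuclideanSpace ℝ (Fin 3) ×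
        EuclideanSpace ℝ (Fin 3)) (τ : ℝ) => f (p.2.1 + τ • p.2.2) p.1)
      ((θ₀, c₀, v₀), t θ₀ c₀ v₀) :=
    (hf' _).comp (g := fun p => f p.1 p.2)
      (f := fun q : (EuclideanSpace ℝ (Fin m) × EuclideanSpace ℝ (Fin 3) ×
        EuclideanSpace ℝ (Fin 3)) × ℝ => (q.1.2.1 + q.2 • q.1.2.2, q.1.1)) _ (by fun_prop)
  have hd : HasDerivAt (fun τ : ℝ => f (c₀ + τ • v₀) θ₀) ⟪g, v₀⟫ (t θ₀ c₀ v₀) := by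
    subst hgdef
    exact ((hf' _).comp (f := fun x => (x, θ₀)) _ (by fun_prop)).hasGradientAt.hasDerivAt_comp_ray
  have hsurrogate := hasFDerivAt_newton_step_of_implicit hΦ hd hg ht'.hasFDerivAt ht
  refine ⟨by simp [ht.self_of_nhds], ?_, ?_, ?_⟩
  · exact fderiv_comp_eq_of_hasFDerivAt (e := fun θ => (θ, c₀, v₀)) hsurrogate ht'.hasFDerivAt
      (by fun_prop) rfl
  · exact fderiv_comp_eq_of_hasFDerivAt (e := fun c => (θ₀, c, v₀)) hsurrogate ht'.hasFDerivAt
      (by fun_prop) rfl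
  · exact fderiv_comp_eq_of_hasFDerivAt (e := fun v => (θ₀, c₀, v)) hsurrogate ht'.hasFDerivAt
      (by fun_prop) rfl
end

section
/- Define x̂(θ,c,v) = c + t₀v - (v / ⟨∇ₓf(x₀;θ₀), v₀⟩)·f(c + t₀v; θ). Then x̂(θ₀,c₀,v₀) = x₀, and the first derivatives of x̂ with respect to θ, c, and v at (θ₀,c₀,v₀) agree with those of the exact intersection point x(θ,c,v) = c + t(θ,c,v)·v. -/
open scoped RealInnerProductSpace Topology

/-!
The exact parameter `t(θ,c,v)` is a root of `s ↦ f(c + s v; θ)`, and `x̂` is one Newton step for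
that root started from `t₀`, with the slope frozen at its value `⟨∇ₓf(x₀;θ₀), v₀⟩` at the base
point. Differentiating the identity `f(c + t v; θ) = 0` gives `Dt = -(∂f/∂(θ,c,v)) / ⟨∇ₓf, v₀⟩`,
and since `f` vanishes at the base point this is exactly the first-order correction made by the
Newton step; so `x̂` and `x` have the same value and the same full derivative at `(θ₀, c₀, v₀)`,
hence the same partial derivatives.
-/

section Newton

variable {𝕜 X Y E : Type*} [NontriviallyNormedField 𝕜]
  [NormedAddCommGroup X] [NormedSpace 𝕜 X] [NormedAddCommGroup Y] [NormedSpace 𝕜 Y]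
  [NormedAddCommGroup E] [NormedSpace 𝕜 E]

theorem HasFDerivAt.eq_of_implicit {Φ : X × 𝕜 → 𝕜} {Φ' : X × 𝕜 →L[𝕜] 𝕜} {τ : X → 𝕜}
    {τ' : X →L[𝕜] 𝕜} {p₀ : X} {r : 𝕜} (hΦ : HasFDerivAt Φ Φ' (p₀, τ p₀))
    (hτ : HasFDerivAt τ τ' p₀) (hroot : ∀ᶠ p in 𝓝 p₀, Φ (p, τ p) = 0)
    (hslope : HasDerivAt (fun s => Φ (p₀, s)) r (τ p₀)) (hr : r ≠ 0) :
    τ' = -r⁻¹ • Φ'.comp (ContinuousLinearMap.inl 𝕜 X 𝕜) := by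
  have hΦ'r : Φ' (0, 1) = r :=
    (hΦ.comp_hasDerivAt _ ((hasDerivAt_const _ p₀).prodMk (hasDerivAt_id _))).unique hslope
  have hzero : Φ'.comp ((ContinuousLinearMap.id 𝕜 X).prod τ') = 0 :=
    (hΦ.comp p₀ ((hasFDerivAt_id p₀).prodMk hτ)).unique
      ((hasFDerivAt_const 0 p₀).congr_of_eventuallyEq hroot)
  ext w
  have hw : Φ' (w, 0) + τ' w * r = 0 := by
    have h := congrArg (fun L : X →L[𝕜] 𝕜 => L w) hzero
    have hsplit : ((w, τ' w) : X × 𝕜) = (w, 0) + τ' w • (0, 1) := by simp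
    simp only [ContinuousLinearMap.comp_apply, ContinuousLinearMap.prod_apply,
      ContinuousLinearMap.id_apply, zero_apply] at h
    rwa [hsplit, map_add, map_smul, hΦ'r, smul_eq_mul] at h
  simp only [smul_apply, ContinuousLinearMap.comp_apply,
    ContinuousLinearMap.inl_apply, smul_eq_mul]
  field_simp
  linear_combination hw

theorem hasFDerivAt_newtonStep {c v : X → E} {c' v' : X →L[𝕜] E} {Φ : X × 𝕜 → 𝕜}
    {Φ' : X × 𝕜 →L[𝕜] 𝕜} {τ : X → 𝕜} {τ' : X →L[𝕜] 𝕜} {p₀ : X} {r : 𝕜}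
    (hc : HasFDerivAt c c' p₀) (hv : HasFDerivAt v v' p₀) (hΦ : HasFDerivAt Φ Φ' (p₀, τ p₀))
    (hτ : HasFDerivAt τ τ' p₀) (hroot : ∀ᶠ p in 𝓝 p₀, Φ (p, τ p) = 0)
    (hslope : HasDerivAt (fun s => Φ (p₀, s)) r (τ p₀)) (hr : r ≠ 0) :
    HasFDerivAt (fun p => c p + τ p₀ • v p - (Φ (p, τ p₀) / r) • v p)
      (c' + (τ p₀ • v' + τ'.smulRight (v p₀))) p₀ := by
  have hΦ₀ : Φ (p₀, τ p₀) = 0 := hroot.self_of_nhds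
  have hfrozen : HasFDerivAt (fun p => Φ (p, τ p₀) / r)
      (r⁻¹ • Φ'.comp (ContinuousLinearMap.inl 𝕜 X 𝕜)) p₀ := by
    have h : HasFDerivAt (fun p => r⁻¹ * Φ (p, τ p₀)) _ p₀ :=
      (hΦ.comp p₀ (hasFDerivAt_prodMk_left p₀ (τ p₀))).const_mul r⁻¹
    simpa only [div_eq_inv_mul] using h
  refine ((hc.add (hv.const_smul (τ p₀))).sub (hfrozen.smul hv)).congr_fderiv ?_
  rw [hΦ.eq_of_implicit hτ hroot hslope hr, hΦ₀]
  ext w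
  simp [sub_eq_add_neg, add_assoc]

theorem fderiv_comp_eq_of_hasFDerivAt_s4 {F G : X → E} {L : X →L[𝕜] E} {ι : Y → X} {y : Y}
    (hF : HasFDerivAt F L (ι y)) (hG : HasFDerivAt G L (ι y)) (hι : DifferentiableAt 𝕜 ι y) :
    fderiv 𝕜 (F ∘ ι) y = fderiv 𝕜 (G ∘ ι) y :=
  (hF.comp y hι.hasFDerivAt).fderiv.trans (hG.comp y hι.hasFDerivAt).fderiv.symm

end Newton

/-- Lemma 1 (sample network surrogate, point form): the surrogate
`x̂(θ,c,v) = c + t₀ v - (v / ⟨∇ₓf(x₀;θ₀), v₀⟩) f(c + t₀ v; θ)` agrees with the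
exact intersection point `x(θ,c,v) = c + t(θ,c,v) v` in value and in all first
partial derivatives at `(θ₀, c₀, v₀)`. -/
theorem sample_network_point {m : ℕ}
    (f : EuclideanSpace ℝ (Fin 3) → EuclideanSpace ℝ (Fin m) → ℝ)
    (t : EuclideanSpace ℝ (Fin m) → EuclideanSpace ℝ (Fin 3) → EuclideanSpace ℝ (Fin 3) → ℝ)
    (θ₀ : EuclideanSpace ℝ (Fin m)) (c₀ v₀ : EuclideanSpace ℝ (Fin 3))
    (hf : ContDiff ℝ 1 (fun p : EuclideanSpace ℝ (Fin 3) × EuclideanSpace ℝ (Fin m) => f p.1 p.2))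
    (ht : ∀ᶠ p : EuclideanSpace ℝ (Fin m) × EuclideanSpace ℝ (Fin 3) × EuclideanSpace ℝ (Fin 3)
        in nhds (θ₀, c₀, v₀), f (p.2.1 + t p.1 p.2.1 p.2.2 • p.2.2) p.1 = 0)
    (ht' : DifferentiableAt ℝ
      (fun p : EuclideanSpace ℝ (Fin m) × EuclideanSpace ℝ (Fin 3) × EuclideanSpace ℝ (Fin 3) =>
        t p.1 p.2.1 p.2.2) (θ₀, c₀, v₀))
    (t₀ : ℝ) (ht₀ : t₀ = t θ₀ c₀ v₀)
    (x₀ : EuclideanSpace ℝ (Fin 3)) (hx₀ : x₀ = c₀ + t₀ • v₀)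
    (g : EuclideanSpace ℝ (Fin 3)) (hgdef : g = gradient (fun x => f x θ₀) x₀)
    (hg : ⟪g, v₀⟫ ≠ 0)
    (xhat x : EuclideanSpace ℝ (Fin m) → EuclideanSpace ℝ (Fin 3) → EuclideanSpace ℝ (Fin 3) →
      EuclideanSpace ℝ (Fin 3))
    (hxhat : ∀ θ c v, xhat θ c v = c + t₀ • v - (f (c + t₀ • v) θ / ⟪g, v₀⟫) • v)
    (hx : ∀ θ c v, x θ c v = c + t θ c v • v) :
    xhat θ₀ c₀ v₀ = x₀ ∧
    fderiv ℝ (fun θ => xhat θ c₀ v₀) θ₀ = fderiv ℝ (fun θ => x θ c₀ v₀) θ₀ ∧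
    fderiv ℝ (fun c => xhat θ₀ c v₀) c₀ = fderiv ℝ (fun c => x θ₀ c v₀) c₀ ∧
    fderiv ℝ (fun v => xhat θ₀ c₀ v) v₀ = fderiv ℝ (fun v => x θ₀ c₀ v) v₀ := by
  subst ht₀ hx₀ hgdef
  simp only [hxhat, hx]
  have hroot : f (c₀ + t θ₀ c₀ v₀ • v₀) θ₀ = 0 := ht.self_of_nhds
  set p₀ := (θ₀, c₀, v₀)
  let Φ : (EuclideanSpace ℝ (Fin m) × EuclideanSpace ℝ (Fin 3) × EuclideanSpace ℝ (Fin 3)) × ℝ →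
      ℝ := fun q => f (q.1.2.1 + q.2 • q.1.2.2) q.1.1
  have hfd := hf.differentiable one_ne_zero
  have hΦ : DifferentiableAt ℝ Φ (p₀, t θ₀ c₀ v₀) := by fun_prop
  have hslope : HasDerivAt (fun s => Φ (p₀, s))
      ⟪gradient (fun x => f x θ₀) (c₀ + t θ₀ c₀ v₀ • v₀), v₀⟫ (t θ₀ c₀ v₀) := by
    have hline : HasDerivAt (fun s : ℝ => c₀ + s • v₀) v₀ (t θ₀ c₀ v₀) := by
      simpa using ((hasDerivAt_id (t θ₀ c₀ v₀)).smul_const v₀).const_add c₀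
    have hgrad := DifferentiableAt.hasGradientAt (f := fun x => f x θ₀)
      (x := c₀ + t θ₀ c₀ v₀ • v₀) (by fun_prop)
    exact hgrad.hasFDerivAt.comp_hasDerivAt _ hline
  have hnewton := hasFDerivAt_newtonStep (c := fun p => p.2.1) (v := fun p => p.2.2)
    hasFDerivAt_snd.fst hasFDerivAt_snd.snd hΦ.hasFDerivAt ht'.hasFDerivAt ht hslope hg
  have hexact := hasFDerivAt_snd.fst.add (ht'.hasFDerivAt.smul hasFDerivAt_snd.snd)
  refine ⟨by simp [hroot], ?_, ?_, ?_⟩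
  · exact fderiv_comp_eq_of_hasFDerivAt_s4 (ι := fun θ => (θ, c₀, v₀)) hnewton hexact (by fun_prop)
  · exact fderiv_comp_eq_of_hasFDerivAt_s4 (ι := fun c => (θ₀, c, v₀)) hnewton hexact (by fun_prop)
  · exact fderiv_comp_eq_of_hasFDerivAt_s4 (ι := fun v => (θ₀, c₀, v)) hnewton hexact (by fun_prop)
end

section
/- Let f be 1-Lipschitz with f(x) = dist(x, S) for x outside S. The sphere-tracing iteration t_{k+1} = t_k + f(c + t_k v) (with ‖v‖ = 1, t₀ = 0) produces a monotone nondecreasing sequence t_k that is bounded above by t* = min{t ≥ 0 : f(c+tv) = 0} (if it exists), and t_k converges to some t∞ ≤ t* with f(c + t∞ v) = 0; hence t∞ = t*. -/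
noncomputable section

/-- Convergence of sphere tracing: the iteration `t_{k+1} = t_k + f(c + t_k v)`,
with `f(x) = dist(x, S)`, is monotone nondecreasing, bounded above by the first
intersection parameter `t*`, and converges to `t*`. -/
theorem sphere_tracing_converges
    (S : Set (EuclideanSpace ℝ (Fin 3))) (hS : S.Nonempty) (hScl : IsClosed S)
    (f : EuclideanSpace ℝ (Fin 3) → ℝ)
    (hlip : LipschitzWith 1 f)
    (hdist : ∀ x, x ∉ S → f x = Metric.infDist x S)
    (hzero : ∀ x, x ∈ S → f x = 0)
    (c v : EuclideanSpace ℝ (Fin 3)) (hv : ‖v‖ = 1)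
    (tstar : ℝ) (htstar0 : 0 ≤ tstar)
    (hroot : f (c + tstar • v) = 0)
    (hfirst : ∀ s, 0 ≤ s → f (c + s • v) = 0 → tstar ≤ s)
    (t : ℕ → ℝ) (ht0 : t 0 = 0)
    (hrec : ∀ k, t (k + 1) = t k + f (c + t k • v)) :
    Monotone t ∧ (∀ k, t k ≤ tstar) ∧ Filter.Tendsto t Filter.atTop (nhds tstar) := by
  have hfnn : ∀ x, 0 ≤ f x := by
    intro x
    by_cases hx : x ∈ S
    · rw [hzero x hx]
    · rw [hdist x hx]; exact Metric.infDist_nonneg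
  have hmono : Monotone t := by
    apply monotone_nat_of_le_succ
    intro k; rw [hrec k]; linarith [hfnn (c + t k • v)]
  have hdistpt : ∀ a b : ℝ, dist (c + a • v) (c + b • v) = |a - b| := by
    intro a b
    rw [dist_eq_norm]
    have h : (c + a • v) - (c + b • v) = (a - b) • v := by module
    rw [h, norm_smul, hv, Real.norm_eq_abs, mul_one]
  have hstep : ∀ s : ℝ, f (c + s • v) ≤ |s - tstar| := by
    intro s
    have h := hlip.dist_le_mul (c + s • v) (c + tstar • v)
    rw [Real.dist_eq, hroot, sub_zero, NNReal.coe_one, one_mul, hdistpt] at h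
    exact (le_abs_self _).trans h
  have hbound : ∀ k, t k ≤ tstar := by
    intro k
    induction k with
    | zero => rw [ht0]; exact htstar0
    | succ k ih =>
      have h1 : f (c + t k • v) ≤ tstar - t k := by
        have := hstep (t k)
        rwa [abs_of_nonpos (by linarith), neg_sub] at this
      rw [hrec k]; linarith
  have hbdd : BddAbove (Set.range t) := ⟨tstar, by rintro _ ⟨k, rfl⟩; exact hbound k⟩
  set L := ⨆ k, t k with hL
  have htend : Filter.Tendsto t Filter.atTop (nhds L) := tendsto_atTop_ciSup hmono hbdd
  have hLle : L ≤ tstar := ciSup_le hbound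
  have hL0 : 0 ≤ L := ht0 ▸ le_ciSup hbdd 0
  have hfcont : Filter.Tendsto (fun k => f (c + t k • v)) Filter.atTop
      (nhds (f (c + L • v))) := by
    exact (hlip.continuous.tendsto _).comp
      (Filter.Tendsto.const_add c (htend.smul_const v))
  have hdiff : Filter.Tendsto (fun k => f (c + t k • v)) Filter.atTop (nhds 0) := by
    have h1 : Filter.Tendsto (fun k => t (k + 1) - t k) Filter.atTop (nhds (L - L)) :=
      (htend.comp (Filter.tendsto_add_atTop_nat 1)).sub htend
    have h2 : (fun k => t (k + 1) - t k) = fun k => f (c + t k • v) := by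
      funext k; rw [hrec k]; ring
    rw [h2, sub_self] at h1
    exact h1
  have hfL : f (c + L • v) = 0 := tendsto_nhds_unique hfcont hdiff
  have hLtstar : L = tstar := le_antisymm hLle (hfirst L hL0 hfL)
  exact ⟨hmono, hbound, hLtstar ▸ htend⟩
end
end
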